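/- Let N ≥ 1 and d ≥ 0 and let y be an indeterminate. Define c_d(χ) = Σ_{k=0}^{d} C(-χ + d(N+1), k) (-y)^k / (1-y)^{d(N+1)} ∈ ℚ(y) for any integer χ. Then the generating functions W_χ(q) = Σ_d c_d(χ) q^d satisfy the multiplicativity: W_{χ+N}(q) = W_χ(q) · B(q)^N in ℚ(y)[[q]], where B(q) = f(qy/(1-y)^{N+1}) and f is the unique power series with f(0)=1 solving f^N - f^{N+1} + z = 0. -/

import Mathlib

/- STATEMENT 19: With `c_d(χ) = Σ_{k=0}^d C(-χ+d(N+1), k) (-y)^k / (1-y)^(d(N+1))`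
in `ℚ(y)` and `W_χ(q) = Σ_d c_d(χ) q^d`, one has `W_{χ+N} = W_χ ⬝ B^N` where
`B(q) = f(qy/(1-y)^(N+1))` and `f ∈ ℚ[[z]]` is the unique series with `f(0) = 1`
solving `f^N - f^(N+1) + z = 0`. -/

/-- Generalized binomial coefficient `C(a,k)` in `ℚ(y)`. -/
noncomputable def gchoose (a : ℤ) (k : ℕ) : RatFunc ℚ :=
  (∏ i ∈ Finset.range k, ((a : RatFunc ℚ) - (i : RatFunc ℚ))) / (k.factorial : RatFunc ℚ)

/-- `c_d(χ) = Σ_{k=0}^d C(-χ+d(N+1), k) (-y)^k / (1-y)^(d(N+1))`. -/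
noncomputable def cCoeff (N : ℕ) (χ : ℤ) (d : ℕ) : RatFunc ℚ :=
  ∑ k ∈ Finset.range (d + 1),
    gchoose (-χ + d * ((N : ℤ) + 1)) k * (-(RatFunc.X : RatFunc ℚ)) ^ k /
      (1 - RatFunc.X : RatFunc ℚ) ^ (d * (N + 1))

/-- `W_χ(q) = Σ_d c_d(χ) q^d ∈ ℚ(y)[[q]]`. -/
noncomputable def Wseries (N : ℕ) (χ : ℤ) : PowerSeries (RatFunc ℚ) :=
  PowerSeries.mk fun d => cCoeff N χ d

/-- `B(q) = f(qy/(1-y)^(N+1))`, i.e. `f` rescaled by `y/(1-y)^(N+1)`. -/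
noncomputable def Bseries (N : ℕ) (f : PowerSeries ℚ) : PowerSeries (RatFunc ℚ) :=
  PowerSeries.rescale ((RatFunc.X : RatFunc ℚ) / (1 - RatFunc.X) ^ (N + 1))
    (PowerSeries.map (RatFunc.C : ℚ →+* RatFunc ℚ) f)

/-!
Pascal's rule for the binomial coefficients gives the recurrence
`W_{χ+1} = W_χ + z · W_{χ-N}` with `z = q y/(1-y)^(N+1)`. Every family of series indexed by `ℤ`
satisfying this recurrence and vanishing at one index vanishes identically (by induction on the
`q`-adic order), so `W_{χ+1} = W_χ · A` with `A = W_1 / W_0`. Applying this to the recurrence at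
`χ = N` gives `A^(N+1) - A^N = z`, which is also the equation of `B`; since `φ ↦ φ^(N+1) - φ^N`
is injective on series with constant coefficient `1`, `A = B`.
-/

open PowerSeries

theorem Ring.sum_range_choose_add_one_mul_pow {R : Type*} [CommRing R] [BinomialRing R]
    (r x : R) (n : ℕ) :
    ∑ k ∈ Finset.range (n + 2), choose (r + 1) k * x ^ k =
      ∑ k ∈ Finset.range (n + 2), choose r k * x ^ k +
        x * ∑ k ∈ Finset.range (n + 1), choose r k * x ^ k := by
  have hshift : ∑ k ∈ Finset.range (n + 1), choose r k * x ^ (k + 1) =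
      x * ∑ k ∈ Finset.range (n + 1), choose r k * x ^ k := by
    rw [Finset.mul_sum]
    exact Finset.sum_congr rfl fun k _ => by ring
  rw [Finset.sum_range_succ', Finset.sum_range_succ' (fun k => choose r k * x ^ k)]
  simp only [choose_succ_succ, add_mul, Finset.sum_add_distrib, choose_zero_right, hshift]
  ring

namespace PowerSeries

variable {R : Type*} [CommRing R]

theorem eq_zero_of_add_one_eq_add_X_mul {G : ℤ → R⟦X⟧} (a : R⟦X⟧) (m : ℤ) (h0 : G 0 = 0)
    (hG : ∀ ψ, G (ψ + 1) = G ψ + X * (a * G (ψ - m))) (ψ : ℤ) : G ψ = 0 := by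
  have hdvd : ∀ n ψ, X ^ n ∣ G ψ := by
    intro n
    induction n with
    | zero => simp
    | succ n ih =>
      let I := Ideal.span {(X : R⟦X⟧) ^ (n + 1)}
      have hper : Function.Periodic (fun ψ => Ideal.Quotient.mk I (G ψ)) 1 := by
        intro ψ
        have hmem : X * (a * G (ψ - m)) ∈ I := Ideal.mem_span_singleton.2 <| by
          rw [pow_succ']
          exact mul_dvd_mul_left X (dvd_mul_of_dvd_right (ih _) a)
        simp only [hG, map_add, Ideal.Quotient.eq_zero_iff_mem.2 hmem, add_zero]
      intro ψ
      have hψ := hper.int_mul_eq ψ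
      simp only [Int.cast_id, mul_one, h0, map_zero] at hψ
      exact Ideal.mem_span_singleton.1 (Ideal.Quotient.eq_zero_iff_mem.1 hψ)
  ext n
  simpa using X_pow_dvd_iff.1 (hdvd (n + 1) ψ) n n.lt_succ_self

theorem eq_of_pow_succ_sub_pow_eq {A B : R⟦X⟧} (n : ℕ) (hA : constantCoeff A = 1)
    (hB : constantCoeff B = 1) (h : A ^ (n + 1) - A ^ n = B ^ (n + 1) - B ^ n) : A = B := by
  set S := ∑ i ∈ Finset.range (n + 1), A ^ i * B ^ (n + 1 - 1 - i) -
    ∑ i ∈ Finset.range n, A ^ i * B ^ (n - 1 - i)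
  have hS : S * (A - B) = 0 := by
    rw [sub_mul, geom_sum₂_mul, geom_sum₂_mul]
    linear_combination h
  have hSunit : IsUnit S := by
    rw [isUnit_iff_constantCoeff]
    simp [S, hA, hB]
  exact sub_eq_zero.1 ((hSunit.mul_right_eq_zero).1 hS)

end PowerSeries

lemma gchoose_eq_choose (a : ℤ) (k : ℕ) : gchoose a k = Ring.choose (a : RatFunc ℚ) k := by
  have h := Ring.descPochhammer_eq_factorial_smul_choose (a : RatFunc ℚ) k
  rw [← Polynomial.eval₂_smulOneHom_eq_smeval, Polynomial.eval₂_eq_eval_map, descPochhammer_map,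
    descPochhammer_eval_eq_prod_range, nsmul_eq_mul] at h
  rw [gchoose, h, mul_div_cancel_left₀ _ (by exact_mod_cast k.factorial_ne_zero)]

lemma cCoeff_eq (N : ℕ) (χ : ℤ) (d : ℕ) :
    cCoeff N χ d = (∑ k ∈ Finset.range (d + 1),
      Ring.choose (((-χ + d * ((N : ℤ) + 1) : ℤ)) : RatFunc ℚ) k * (-RatFunc.X) ^ k) /
        (1 - RatFunc.X) ^ (d * (N + 1)) := by
  simp only [cCoeff, gchoose_eq_choose, Finset.sum_div]

lemma RatFunc.one_sub_X_ne_zero : (1 - X : RatFunc ℚ) ≠ 0 := by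
  intro h
  simpa using congrArg (RatFunc.eval (RingHom.id ℚ) 0) (sub_eq_zero.1 h)

noncomputable def zScale (N : ℕ) : RatFunc ℚ :=
  RatFunc.X / (1 - RatFunc.X) ^ (N + 1)

lemma cCoeff_succ_succ (N : ℕ) (χ : ℤ) (d : ℕ) :
    cCoeff N (χ + 1) (d + 1) = cCoeff N χ (d + 1) + zScale N * cCoeff N (χ - N) d := by
  have hshift : (((-χ + (d + 1 : ℕ) * ((N : ℤ) + 1) : ℤ)) : RatFunc ℚ) =
      (((-(χ + 1) + (d + 1 : ℕ) * ((N : ℤ) + 1) : ℤ)) : RatFunc ℚ) + 1 := by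
    push_cast; ring
  have harg : -(χ - N) + d * ((N : ℤ) + 1) = -(χ + 1) + (d + 1 : ℕ) * ((N : ℤ) + 1) := by
    push_cast; ring
  rw [cCoeff_eq, cCoeff_eq, cCoeff_eq, hshift, harg, Ring.sum_range_choose_add_one_mul_pow,
    zScale]
  have := RatFunc.one_sub_X_ne_zero
  field_simp
  ring

lemma Wseries_constantCoeff (N : ℕ) (χ : ℤ) : constantCoeff (Wseries N χ) = 1 := by
  simp [Wseries, cCoeff, gchoose]

lemma Wseries_add_one (N : ℕ) (χ : ℤ) :
    Wseries N (χ + 1) = Wseries N χ + X * (C (zScale N) * Wseries N (χ - N)) := by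
  ext (_ | d)
  · simp [Wseries, cCoeff, gchoose]
  · simp only [Wseries, map_add, coeff_succ_X_mul, coeff_C_mul, coeff_mk, cCoeff_succ_succ]

noncomputable def Wratio (N : ℕ) : PowerSeries (RatFunc ℚ) :=
  (Wseries N 0)⁻¹ * Wseries N 1

lemma Wratio_constantCoeff (N : ℕ) : constantCoeff (Wratio N) = 1 := by
  simp [Wratio, constantCoeff_inv, Wseries_constantCoeff]

lemma Wseries_add_one_eq_mul (N : ℕ) (χ : ℤ) : Wseries N (χ + 1) = Wseries N χ * Wratio N := by
  let G ψ := Wseries N (ψ + 1) - Wseries N ψ * Wratio N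
  have hG0 : G 0 = 0 := by
    rw [sub_eq_zero, Wratio, ← mul_assoc, PowerSeries.mul_inv_cancel _ (by
      simp [Wseries_constantCoeff]), one_mul, zero_add]
  have hG : ∀ ψ, G (ψ + 1) = G ψ + X * (C (zScale N) * G (ψ - N)) := by
    intro ψ
    simp only [G, Wseries_add_one N (ψ + 1), Wseries_add_one N ψ,
      show ψ + 1 - N = ψ - N + 1 by ring, Wseries_add_one N (ψ - N)]
    ring
  exact sub_eq_zero.1 (eq_zero_of_add_one_eq_add_X_mul _ _ hG0 hG χ)

lemma Wseries_add_natCast (N : ℕ) (χ : ℤ) (k : ℕ) :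
    Wseries N (χ + k) = Wseries N χ * Wratio N ^ k := by
  induction k with
  | zero => simp
  | succ k ih =>
    rw [Nat.cast_succ, ← add_assoc, Wseries_add_one_eq_mul, ih, pow_succ, mul_assoc]

lemma Wratio_pow_succ_sub_pow (N : ℕ) :
    Wratio N ^ (N + 1) - Wratio N ^ N = X * C (zScale N) := by
  have h := Wseries_add_one N N
  rw [sub_self] at h
  have hWN := Wseries_add_natCast N 0 N
  have hWN1 := Wseries_add_natCast N 0 (N + 1)
  simp only [zero_add, Nat.cast_succ] at hWN hWN1
  rw [hWN1, hWN] at h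
  have hW0 : Wseries N 0 ≠ 0 := fun h0 => by simpa [h0] using Wseries_constantCoeff N 0
  apply mul_left_cancel₀ hW0
  linear_combination h

lemma Bseries_constantCoeff (N : ℕ) {f : PowerSeries ℚ} (hf0 : constantCoeff f = 1) :
    constantCoeff (Bseries N f) = 1 := by
  simp [Bseries, ← coeff_zero_eq_constantCoeff_apply, hf0]

lemma Bseries_pow_succ_sub_pow (N : ℕ) {f : PowerSeries ℚ}
    (hf : f ^ N - f ^ (N + 1) + PowerSeries.X = 0) :
    Bseries N f ^ (N + 1) - Bseries N f ^ N = X * C (zScale N) := by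
  have h := congrArg (fun g => rescale (zScale N) (map RatFunc.C g)) hf
  simp only [map_add, map_sub, map_pow, map_X, rescale_X, map_zero] at h
  change rescale (zScale N) (map RatFunc.C f) ^ (N + 1) -
    rescale (zScale N) (map RatFunc.C f) ^ N = _
  linear_combination -h

theorem W_multiplicativity_general (N : ℕ) (f : PowerSeries ℚ)
    (hf0 : PowerSeries.constantCoeff (R := ℚ) f = 1)
    (hf : f ^ N - f ^ (N + 1) + PowerSeries.X = 0) (χ : ℤ) :
    Wseries N (χ + N) = Wseries N χ * (Bseries N f) ^ N := by
  have hA : Wratio N = Bseries N f :=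
    eq_of_pow_succ_sub_pow_eq N (Wratio_constantCoeff N) (Bseries_constantCoeff N hf0)
      ((Wratio_pow_succ_sub_pow N).trans (Bseries_pow_succ_sub_pow N hf).symm)
  rw [Wseries_add_natCast, hA]

theorem W_multiplicativity (N : ℕ) (hN : 1 ≤ N) (f : PowerSeries ℚ)
    (hf0 : PowerSeries.constantCoeff (R := ℚ) f = 1)
    (hf : f ^ N - f ^ (N + 1) + PowerSeries.X = 0) (χ : ℤ) :
    Wseries N (χ + N) = Wseries N χ * (Bseries N f) ^ N :=
  W_multiplicativity_general N f hf0 hf χ
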